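/- arXiv:2304.11322 — 7 statements merged into one kernel-verified Lean document; each statement's English description precedes it below -/
import Mathlib

section
/- For every β ∈ (1, 3/2], the polynomial P_β(u) = 4a₃u² + 2a₂u + (a₁ - a₃), where a₁ = 36β⁴ - 114β³ + 156β² - 102β + 27, a₂ = 24β⁴ - 56β³ + 48β² - 16β, and a₃ = 12β⁴ - 40β³ + 54β² - 35β + 9, is nonnegative for all u ∈ [-1, 1]. -/
/-!
Expanding around `u = -1`,
`P_β(u) = 4a₃(u+1)² + 2(a₂ - 4a₃)(u+1) + (a₁ + 3a₃ - 2a₂)`,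
so it suffices that these three coefficients are nonnegative. In `t = β - 1 ∈ (0, 1/2]` they are
`4(t + 6t² + 8t³ + 12t⁴)`, `8t(1 + 2t² - 6t³)` and `3 - t - 26t³ + 24t⁴`.
-/

theorem quadratic_nonneg_of_neg_one_le {A B C u : ℝ} (hA : 0 ≤ A) (hB : 2 * A ≤ B)
    (hC : 0 ≤ A - B + C) (hu : -1 ≤ u) : 0 ≤ A * u ^ 2 + B * u + C := by
  have hu' : 0 ≤ u + 1 := by linarith
  have hB' : 0 ≤ B - 2 * A := by linarith
  calc 0 ≤ A * (u + 1) ^ 2 + (B - 2 * A) * (u + 1) + (A - B + C) := by positivity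
    _ = A * u ^ 2 + B * u + C := by ring

namespace BSplineCoeff

noncomputable def a₁ (β : ℝ) : ℝ := 36*β^4 - 114*β^3 + 156*β^2 - 102*β + 27

noncomputable def a₂ (β : ℝ) : ℝ := 24*β^4 - 56*β^3 + 48*β^2 - 16*β

noncomputable def a₃ (β : ℝ) : ℝ := 12*β^4 - 40*β^3 + 54*β^2 - 35*β + 9

theorem a₃_add_one (t : ℝ) : a₃ (t + 1) = t + 6*t^2 + 8*t^3 + 12*t^4 := by
  unfold a₃; ring

theorem a₂_sub_four_mul_a₃_add_one (t : ℝ) :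
    a₂ (t + 1) - 4 * a₃ (t + 1) = 4*t * (1 + 2*t^2 - 6*t^3) := by
  unfold a₂ a₃; ring

theorem a₁_add_three_mul_a₃_sub_two_mul_a₂_add_one (t : ℝ) :
    a₁ (t + 1) + 3 * a₃ (t + 1) - 2 * a₂ (t + 1) = 3 - t - 26*t^3 + 24*t^4 := by
  unfold a₁ a₂ a₃; ring

theorem a₃_nonneg {β : ℝ} (hβ : 1 ≤ β) : 0 ≤ a₃ β := by
  obtain ⟨t, ht, rfl⟩ : ∃ t, 0 ≤ t ∧ β = t + 1 := ⟨β - 1, by linarith, by ring⟩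
  rw [a₃_add_one]
  positivity

theorem four_mul_a₃_le_a₂ {β : ℝ} (h₁ : 1 ≤ β) (h₂ : β ≤ 3/2) : 4 * a₃ β ≤ a₂ β := by
  obtain ⟨t, ht, rfl⟩ : ∃ t, 0 ≤ t ∧ β = t + 1 := ⟨β - 1, by linarith, by ring⟩
  have ht' : t ≤ 1/2 := by linarith
  have key : 0 ≤ 4*t * (1 + 2*t^2 - 6*t^3) := by
    have hcube : 6*t^3 ≤ 3*t^2 := by nlinarith [sq_nonneg t]
    have hfactor : 0 ≤ 1 + 2*t^2 - 6*t^3 := by nlinarith [sq_nonneg t]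
    positivity
  linarith [a₂_sub_four_mul_a₃_add_one t]

theorem two_mul_a₂_le {β : ℝ} (h₁ : 1 ≤ β) (h₂ : β ≤ 3/2) : 2 * a₂ β ≤ a₁ β + 3 * a₃ β := by
  obtain ⟨t, ht, rfl⟩ : ∃ t, 0 ≤ t ∧ β = t + 1 := ⟨β - 1, by linarith, by ring⟩
  have hs : 0 ≤ 1/2 - t := by linarith
  have key : 0 ≤ 3 - t - 26*t^3 + 24*t^4 := by
    nlinarith [mul_nonneg (mul_nonneg ht ht) (mul_nonneg ht hs), mul_nonneg (mul_nonneg ht ht) hs,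
      mul_nonneg ht hs, pow_nonneg ht 3]
  linarith [a₁_add_three_mul_a₃_sub_two_mul_a₂_add_one t]

end BSplineCoeff

open BSplineCoeff in
theorem stmt_2 (β : ℝ) (hβ : β ∈ Set.Ioc (1:ℝ) (3/2)) (u : ℝ) (hu : u ∈ Set.Icc (-1:ℝ) 1) :
    0 ≤ 4*(12*β^4 - 40*β^3 + 54*β^2 - 35*β + 9)*u^2
      + 2*(24*β^4 - 56*β^3 + 48*β^2 - 16*β)*u
      + ((36*β^4 - 114*β^3 + 156*β^2 - 102*β + 27) - (12*β^4 - 40*β^3 + 54*β^2 - 35*β + 9)) := by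
  obtain ⟨hβ₁, hβ₂⟩ := hβ
  have hA : 0 ≤ 4 * a₃ β := by linarith [a₃_nonneg hβ₁.le]
  have hB : 2 * (4 * a₃ β) ≤ 2 * a₂ β := by linarith [four_mul_a₃_le_a₂ hβ₁.le hβ₂]
  have hC : 0 ≤ 4 * a₃ β - 2 * a₂ β + (a₁ β - a₃ β) := by linarith [two_mul_a₂_le hβ₁.le hβ₂]
  exact quadratic_nonneg_of_neg_one_le hA hB hC hu.1
end

section
/- For every β ∈ (3/2, 2), the quartic polynomial K_β(u) = 16b₅u⁴ + 8b₄u³ + (4b₃ - 12b₅)u² + (2b₂ - 4b₄)u + (b₁ - b₃ + b₅) is nonnegative for all u ∈ [-1, 1], where b₁ = 36β⁴ - 74β³ + 6β² + 83β - 48, b₂ = 72β⁴ - 272β³ + 456β² - 400β + 144, b₃ = 48β⁴ - 166β³ + 216β² - 116β + 9, b₄ = 24β⁴ - 108β³ + 204β² - 192β + 72, b₅ = 8β³ - 30β² + 37β - 15. -/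
/-!
Substitute `s = 2 - β ∈ (0, 1/2)` and `t = u + 1 ≥ 0`. Expanded in powers of `t`, the quartic has
coefficients that are products of factors positive on `0 ≤ s ≤ 1/2` (two cubics in `s` among them),
so every term is nonnegative.
-/

def shiftedQuartic (s t : ℝ) : ℝ :=
  12*s^3*(3 - 5*s)
    + 8*s*(30*s^3 - 28*s^2 + 6*s + 1)*t
    + 4*s*(-96*s^3 + 118*s^2 - 42*s + 11)*t^2
    + 32*s*(1 - 2*s)*(2 + 3*s)*(1 - s)*t^3
    + 16*(1 - 2*s)*(3 - 4*s)*(1 - s)*t^4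

lemma quartic_eq_shiftedQuartic (β u : ℝ) :
    16*(8*β^3 - 30*β^2 + 37*β - 15)*u^4
      + 8*(24*β^4 - 108*β^3 + 204*β^2 - 192*β + 72)*u^3
      + (4*(48*β^4 - 166*β^3 + 216*β^2 - 116*β + 9) - 12*(8*β^3 - 30*β^2 + 37*β - 15))*u^2
      + (2*(72*β^4 - 272*β^3 + 456*β^2 - 400*β + 144) - 4*(24*β^4 - 108*β^3 + 204*β^2 - 192*β + 72))*u
      + ((36*β^4 - 74*β^3 + 6*β^2 + 83*β - 48) - (48*β^4 - 166*β^3 + 216*β^2 - 116*β + 9)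
          + (8*β^3 - 30*β^2 + 37*β - 15))
      = shiftedQuartic (2 - β) (u + 1) := by
  unfold shiftedQuartic
  ring

lemma cubic_linear_coeff_nonneg {s : ℝ} (hs : 0 ≤ s) : 0 ≤ 30*s^3 - 28*s^2 + 6*s + 1 := by
  nlinarith [mul_nonneg hs (sq_nonneg (15*s - 7)), sq_nonneg s]

lemma cubic_quadratic_coeff_nonneg {s : ℝ} (hs : s ≤ 1/2) :
    0 ≤ -96*s^3 + 118*s^2 - 42*s + 11 := by
  nlinarith [mul_nonneg (sq_nonneg s) (by linarith : (0:ℝ) ≤ 1/2 - s), sq_nonneg (10*s - 3)]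

lemma shiftedQuartic_nonneg {s t : ℝ} (hs₀ : 0 ≤ s) (hs₁ : s ≤ 1/2) (ht : 0 ≤ t) :
    0 ≤ shiftedQuartic s t := by
  have h₁ := cubic_linear_coeff_nonneg hs₀
  have h₂ := cubic_quadratic_coeff_nonneg hs₁
  have h3 : 0 ≤ 3 - 5*s := by linarith
  have h12 : 0 ≤ 1 - 2*s := by linarith
  have h23 : 0 ≤ 2 + 3*s := by linarith
  have h1 : 0 ≤ 1 - s := by linarith
  have h34 : 0 ≤ 3 - 4*s := by linarith
  unfold shiftedQuartic
  positivity

theorem stmt_3 (β : ℝ) (hβ : β ∈ Set.Ioo (3/2 : ℝ) 2) (u : ℝ) (hu : u ∈ Set.Icc (-1:ℝ) 1) :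
    0 ≤ 16*(8*β^3 - 30*β^2 + 37*β - 15)*u^4
      + 8*(24*β^4 - 108*β^3 + 204*β^2 - 192*β + 72)*u^3
      + (4*(48*β^4 - 166*β^3 + 216*β^2 - 116*β + 9) - 12*(8*β^3 - 30*β^2 + 37*β - 15))*u^2
      + (2*(72*β^4 - 272*β^3 + 456*β^2 - 400*β + 144) - 4*(24*β^4 - 108*β^3 + 204*β^2 - 192*β + 72))*u
      + ((36*β^4 - 74*β^3 + 6*β^2 + 83*β - 48) - (48*β^4 - 166*β^3 + 216*β^2 - 116*β + 9)
          + (8*β^3 - 30*β^2 + 37*β - 15)) := by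
  rw [quartic_eq_shiftedQuartic]
  exact shiftedQuartic_nonneg (by linarith [hβ.2]) (by linarith [hβ.1]) (by linarith [hu.1])
end

section
/- For ρ ≥ 0.74 and all w ∈ [0, 1/2], the function f_ρ(w) = e^{4ρ(1-2w)} - (w·e^{-2ρ} + 1 - w)/(w - w·e^{-2ρ} + e^{-2ρ}) is nonnegative. -/
/-!
Put `x = 1 - 2w ∈ [0, 1]` and `t = e^{-2ρ}`. Since `tanh ρ = (1 - t) / (1 + t)` and
`tanh (2ρx) = (e^{4ρx} - 1) / (e^{4ρx} + 1)`, clearing the positive denominator turns the claim into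
`x tanh ρ ≤ tanh (2ρx)`, a weak form of the concavity of `tanh` on `[0, ∞)`. For `x ≥ 1/2` this is
monotonicity of `tanh`; for `x ≤ 1/2` it follows from the elementary bounds
`s / (1 + s) ≤ tanh s ≤ 2s / (1 + s)`, valid for `s ≥ 0`.
-/

open Real

namespace Real

theorem tanh_eq_exp_two_mul (s : ℝ) : tanh s = (exp (2 * s) - 1) / (exp (2 * s) + 1) := by
  rw [tanh_eq, two_mul, exp_add, exp_neg]
  field_simp

theorem tanh_eq_exp_neg_two_mul (s : ℝ) :
    tanh s = (1 - exp (-2 * s)) / (1 + exp (-2 * s)) := by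
  rw [tanh_eq_exp_two_mul, neg_mul, exp_neg]
  field_simp

theorem monotone_tanh : Monotone tanh := by
  have h (s : ℝ) : tanh s = 1 - 2 / (exp (2 * s) + 1) := by
    rw [tanh_eq_exp_two_mul]; field_simp; ring
  intro a b hab
  rw [h, h]
  gcongr

theorem tanh_nonneg {s : ℝ} (hs : 0 ≤ s) : 0 ≤ tanh s :=
  tanh_zero ▸ monotone_tanh hs

theorem div_one_add_le_tanh {s : ℝ} (hs : 0 ≤ s) : s / (1 + s) ≤ tanh s := by
  have := add_one_le_exp (2 * s)
  rw [tanh_eq_exp_two_mul, div_le_div_iff₀ (by positivity) (by positivity)]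
  linear_combination this

theorem tanh_le_two_mul_div_one_add {t : ℝ} (ht : 0 ≤ t) : tanh t ≤ 2 * t / (1 + t) := by
  rcases le_total 1 t with h1 | h1
  · calc tanh t ≤ 1 := (tanh_lt_one t).le
      _ ≤ 2 * t / (1 + t) := by rw [le_div_iff₀ (by positivity)]; linarith
  · -- `exp (2t) (1 - t) ≤ exp t ≤ 1 + t + t² ≤ 1 + 3t`
    have hsq : exp t ≤ 1 + t + t ^ 2 := by
      have := abs_exp_sub_one_sub_id_le (x := t) (by rw [abs_le]; constructor <;> linarith)
      linarith [le_abs_self (exp t - 1 - t)]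
    have hexp : exp (2 * t) * (1 - t) ≤ exp t := by
      have hinv : exp t * (1 - t) ≤ 1 := by
        calc exp t * (1 - t) ≤ exp t * exp (-t) := by gcongr; linarith [add_one_le_exp (-t)]
          _ = 1 := by rw [← exp_add, add_neg_cancel, exp_zero]
      calc exp (2 * t) * (1 - t) = exp t * (exp t * (1 - t)) := by
            rw [two_mul, exp_add]; ring
        _ ≤ exp t := mul_le_of_le_one_right (exp_pos t).le hinv
    rw [tanh_eq_exp_two_mul, div_le_div_iff₀ (by positivity) (by positivity)]
    nlinarith

theorem mul_tanh_le_two_mul_mul_tanh {s t : ℝ} (hs : 0 ≤ s) (hst : s ≤ t) :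
    s * tanh t ≤ 2 * t * tanh s := by
  have ht : 0 ≤ t := hs.trans hst
  calc s * tanh t ≤ s * (2 * t / (1 + t)) := by gcongr; exact tanh_le_two_mul_div_one_add ht
    _ = 2 * t * (s / (1 + t)) := by ring
    _ ≤ 2 * t * (s / (1 + s)) := by gcongr
    _ ≤ 2 * t * tanh s := by gcongr; exact div_one_add_le_tanh hs

theorem mul_tanh_le_tanh_two_mul_mul {b x : ℝ} (hb : 0 ≤ b) (hx₀ : 0 ≤ x) (hx₁ : x ≤ 1) :
    x * tanh b ≤ tanh (2 * b * x) := by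
  rcases le_total x (1 / 2) with hx | hx
  · rcases hb.eq_or_lt with rfl | hb
    · simp
    have key := mul_tanh_le_two_mul_mul_tanh (s := 2 * b * x) (t := b) (by positivity) (by nlinarith)
    exact le_of_mul_le_mul_left (by linarith) (by positivity : 0 < 2 * b)
  · calc x * tanh b ≤ tanh b := mul_le_of_le_one_left (tanh_nonneg hb) hx₁
      _ ≤ tanh (2 * b * x) := monotone_tanh (by nlinarith)

end Real

theorem stmt_10 (ρ : ℝ) (hρ : 0.74 ≤ ρ) (w : ℝ) (hw : w ∈ Set.Icc (0:ℝ) (1/2)) :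
    0 ≤ Real.exp (4*ρ*(1 - 2*w)) -
      (w * Real.exp (-2*ρ) + 1 - w) / (w - w * Real.exp (-2*ρ) + Real.exp (-2*ρ)) := by
  obtain ⟨hw₀, hw₁⟩ := hw
  have hconc := mul_tanh_le_tanh_two_mul_mul (b := ρ) (x := 1 - 2 * w) (by linarith)
    (by linarith) (by linarith)
  rw [tanh_eq_exp_neg_two_mul, tanh_eq_exp_two_mul,
    show 2 * (2 * ρ * (1 - 2 * w)) = 4 * ρ * (1 - 2 * w) by ring] at hconc
  set t := exp (-2 * ρ)
  set E := exp (4 * ρ * (1 - 2 * w))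
  have ht₀ : 0 < t := exp_pos _
  have ht₁ : t ≤ 1 := exp_le_one_iff.mpr (by linarith)
  rw [mul_div_assoc', div_le_div_iff₀ (by positivity) (by positivity)] at hconc
  rw [sub_nonneg, div_le_iff₀ (by nlinarith)]
  linear_combination (1 / 2) * hconc
end

section
/- For ρ ≥ 0.74 and w ∈ (1/4, 1/2], one has φ_ρ(w) := (w/(1-w)) · (e^{2ρ(2-4w)} - e^{-2ρ})/(1 - e^{2ρ(2-4w)}·e^{-2ρ}) ≥ 1. -/
/-!
Write `q = e^{-2ρ}` and `E = e^{4ρ(1-2w)}`. Clearing denominators, the claim is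
`E (w + (1-w) q) ≥ (1-w) + w q`. The two sides differ by `(1-2w)(1-q)` at `E = 1`, so `E ≥ 1 + 4ρ(1-2w)`
reduces it to `1 - q ≤ 4ρ (w + (1-w) q)`. The right side increases in `w`, and at `w = 1/4` this is
`1 - q ≤ ρ (1 + 3q)`, which holds for `ρ ≥ 1` trivially and for `0.74 ≤ ρ ≤ 1` because then `q ≥ e^{-2} > 0.135`.
-/

open Real

lemma exp_neg_two_gt : (0.135 : ℝ) < exp (-2) := by
  have h : exp (-2) = exp (-1) * exp (-1) := by rw [← exp_add]; norm_num
  nlinarith [exp_neg_one_gt_d9]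

lemma one_sub_exp_neg_two_mul_le {ρ : ℝ} (hρ : 0.74 ≤ ρ) :
    1 - exp (-2 * ρ) ≤ ρ * (1 + 3 * exp (-2 * ρ)) := by
  have hq := exp_pos (-2 * ρ)
  rcases le_or_gt 1 ρ with h | h
  · nlinarith
  · have : exp (-2) ≤ exp (-2 * ρ) := exp_le_exp.2 (by linarith)
    nlinarith [exp_neg_two_gt]

lemma le_exp_mul_of_sub_le {A B s : ℝ} (hA : 0 ≤ A) (h : B - A ≤ s * A) : B ≤ exp s * A := by
  nlinarith [mul_le_mul_of_nonneg_right (add_one_le_exp s) hA]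

lemma one_le_div_mul_div_of_le {w E q : ℝ} (hw : w < 1) (hEq : E * q < 1)
    (h : 1 - w + w * q ≤ E * (w + (1 - w) * q)) :
    1 ≤ w / (1 - w) * ((E - q) / (1 - E * q)) := by
  rw [div_mul_div_comm, le_div_iff₀ (mul_pos (sub_pos.2 hw) (sub_pos.2 hEq))]
  linarith

theorem stmt_12 (ρ : ℝ) (hρ : 0.74 ≤ ρ) (w : ℝ) (hw : w ∈ Set.Ioc (1/4 : ℝ) (1/2)) :
    1 ≤ (w/(1 - w)) *
      ((Real.exp (2*ρ*(2 - 4*w)) - Real.exp (-2*ρ)) /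
        (1 - Real.exp (2*ρ*(2 - 4*w)) * Real.exp (-2*ρ))) := by
  obtain ⟨hw_gt, hw_le⟩ := hw
  set q := exp (-2 * ρ)
  have hq : 0 < q := exp_pos _
  have hq_lt : q < 1 := exp_lt_one_iff.2 (by linarith)
  have hρq := one_sub_exp_neg_two_mul_le hρ
  have hkey : 1 - q ≤ 4 * ρ * (w + (1 - w) * q) := by nlinarith
  have hEq : exp (2 * ρ * (2 - 4 * w)) * q < 1 := by
    rw [← exp_add, exp_lt_one_iff]; nlinarith
  refine one_le_div_mul_div_of_le (by linarith) hEq (le_exp_mul_of_sub_le (by nlinarith) ?_)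
  nlinarith [mul_le_mul_of_nonneg_left hkey (by linarith : (0 : ℝ) ≤ 1 - 2 * w)]
end

section
/- For 0 < ρ < 2, one has e^{π/2} > 4·(1 + Σ_{l≥2} l² e^{-π(l²-1)}), and consequently h₁·e^{-π/ρ²} > h₂ where h₁ = Σ_{l≥1} (2l-1)² e^{-π(2l-1)²/ρ²} and h₂ = Σ_{l≥1} (2l)² e^{-π(2l)²/ρ²}. -/
/-! Put t = π/ρ², so that 4t > π. The first odd term alone gives h₁ e^{-t} ≥ e^{-2t}.
Writing the even terms as
  (2m)² e^{-4m²t} = 4e^{-4t} m² e^{-4t(m²-1)} ≤ 4e^{-4t} m² e^{-π(m²-1)}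
gives h₂ ≤ 4e^{-4t}(1 + Σ_{l≥2} l² e^{-π(l²-1)}) < e^{-4t} e^{π/2} < e^{-2t}, where the middle
inequality is the numerical estimate, obtained by comparing the series with a geometric one. -/

open Real Function

lemma summable_sq_mul_exp_neg_mul_sq {c : ℝ} (hc : 0 < c) :
    Summable fun n : ℕ => (n : ℝ) ^ 2 * exp (-c * n ^ 2) := by
  refine (summable_pow_mul_exp_neg_nat_mul 2 hc).of_nonneg_of_le (fun _ => by positivity)
    fun n => mul_le_mul_of_nonneg_left (exp_le_exp.2 ?_) (by positivity)
  have hn : (n : ℝ) ≤ (n : ℝ) ^ 2 := by exact_mod_cast Nat.le_self_pow two_ne_zero n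
  nlinarith

lemma summable_sq_mul_exp_neg_mul_sq_two_mul_add {c : ℝ} (hc : 0 < c) (b : ℕ) :
    Summable fun l : ℕ => (2 * (l : ℝ) + b) ^ 2 * exp (-c * (2 * l + b) ^ 2) := by
  have hi : Injective fun l : ℕ => 2 * l + b := fun _ _ h => by simpa using h
  refine ((summable_sq_mul_exp_neg_mul_sq hc).comp_injective hi).congr fun l => ?_
  simp

lemma eight_lt_exp_three : 8 < exp 3 := by
  linarith [quadratic_le_exp_of_nonneg (by norm_num : (0 : ℝ) ≤ 3)]

lemma add_two_sq_le_four_pow_succ (l : ℕ) : ((l : ℝ) + 2) ^ 2 ≤ 4 ^ (l + 1) := by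
  induction l with
  | zero => norm_num
  | succ n ih =>
    calc ((n + 1 : ℕ) + 2 : ℝ) ^ 2 ≤ 4 * ((n : ℝ) + 2) ^ 2 := by
          push_cast
          nlinarith [(Nat.cast_nonneg n : (0 : ℝ) ≤ n)]
      _ ≤ 4 ^ (n + 1 + 1) := by rw [pow_succ' 4 (n + 1)]; gcongr

lemma add_two_sq_mul_exp_neg_pi_le_geometric (l : ℕ) :
    ((l : ℝ) + 2) ^ 2 * exp (-π * (((l : ℝ) + 2) ^ 2 - 1)) ≤ 1 / 128 * (1 / 2) ^ l := by
  have hexp : exp (-π * (((l : ℝ) + 2) ^ 2 - 1)) ≤ (1 / 8) ^ (4 * l + 3) := by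
    calc exp (-π * (((l : ℝ) + 2) ^ 2 - 1)) ≤ exp (-3) ^ (4 * l + 3) := by
          rw [← exp_nat_mul, exp_le_exp]
          push_cast
          nlinarith [pi_gt_three, sq_nonneg (l : ℝ), (Nat.cast_nonneg l : (0 : ℝ) ≤ l)]
      _ ≤ (1 / 8) ^ (4 * l + 3) := by
          gcongr
          rw [exp_neg, inv_le_comm₀ (exp_pos _) (by norm_num)]
          linarith [eight_lt_exp_three]
  calc ((l : ℝ) + 2) ^ 2 * exp (-π * (((l : ℝ) + 2) ^ 2 - 1))
      ≤ 4 ^ (l + 1) * (1 / 8) ^ (4 * l + 3) :=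
        mul_le_mul (add_two_sq_le_four_pow_succ l) hexp (exp_nonneg _) (by positivity)
    _ = 1 / 128 * (4 * (1 / 8) ^ 4) ^ l := by rw [mul_pow, ← pow_mul]; ring
    _ ≤ 1 / 128 * (1 / 2) ^ l := by gcongr; norm_num

lemma summable_add_two_sq_mul_exp_neg_pi :
    Summable fun l : ℕ => ((l : ℝ) + 2) ^ 2 * exp (-π * (((l : ℝ) + 2) ^ 2 - 1)) :=
  (summable_geometric_two.mul_left _).of_nonneg_of_le (fun _ => by positivity)
    add_two_sq_mul_exp_neg_pi_le_geometric

lemma tsum_add_two_sq_mul_exp_neg_pi_le :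
    ∑' l : ℕ, ((l : ℝ) + 2) ^ 2 * exp (-π * (((l : ℝ) + 2) ^ 2 - 1)) ≤ 1 / 64 :=
  calc _ ≤ ∑' l : ℕ, 1 / 128 * (1 / 2 : ℝ) ^ l :=
        summable_add_two_sq_mul_exp_neg_pi.tsum_le_tsum add_two_sq_mul_exp_neg_pi_le_geometric
          (summable_geometric_two.mul_left _)
    _ = 1 / 64 := by rw [tsum_mul_left, tsum_geometric_two]; norm_num

lemma four_mul_one_add_tsum_lt_exp_pi_div_two :
    4 * (1 + ∑' l : ℕ, ((l : ℝ) + 2) ^ 2 * exp (-π * (((l : ℝ) + 2) ^ 2 - 1))) <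
      exp (π / 2) :=
  calc _ ≤ 4 * (1 + 1 / 64 : ℝ) := by linarith [tsum_add_two_sq_mul_exp_neg_pi_le]
    _ < 2.7182818283 * (1 + 1 / 2 + (1 / 2) ^ 2 / 2) := by norm_num
    _ < exp 1 * exp (1 / 2) :=
        mul_lt_mul exp_one_gt_d9 (quadratic_le_exp_of_nonneg (by norm_num)) (by norm_num)
          (exp_pos 1).le
    _ ≤ exp (π / 2) := by rw [← exp_add, exp_le_exp]; linarith [pi_gt_three]

lemma two_mul_sq_mul_exp_le {t x : ℝ} (ht : π ≤ 4 * t) (hx : 1 ≤ x ^ 2) :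
    (2 * x) ^ 2 * exp (-t * (2 * x) ^ 2) ≤
      4 * exp (-(4 * t)) * (x ^ 2 * exp (-π * (x ^ 2 - 1))) := by
  have hexp : exp (-t * (2 * x) ^ 2) ≤ exp (-(4 * t)) * exp (-π * (x ^ 2 - 1)) := by
    rw [← exp_add, exp_le_exp]
    nlinarith
  calc (2 * x) ^ 2 * exp (-t * (2 * x) ^ 2)
      ≤ (2 * x) ^ 2 * (exp (-(4 * t)) * exp (-π * (x ^ 2 - 1))) := by gcongr
    _ = _ := by ring

lemma tsum_two_mul_add_two_sq_mul_exp_le {t : ℝ} (ht : π ≤ 4 * t) :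
    ∑' l : ℕ, (2 * (l : ℝ) + 2) ^ 2 * exp (-t * (2 * l + 2) ^ 2) ≤
      4 * exp (-(4 * t)) *
        (1 + ∑' l : ℕ, ((l : ℝ) + 2) ^ 2 * exp (-π * (((l : ℝ) + 2) ^ 2 - 1))) := by
  have hs : Summable fun l : ℕ => (2 * (l : ℝ) + 2) ^ 2 * exp (-t * (2 * l + 2) ^ 2) := by
    simpa using summable_sq_mul_exp_neg_mul_sq_two_mul_add (by linarith [pi_pos]) 2
  rw [hs.tsum_eq_zero_add, mul_add, ← tsum_mul_left]
  refine add_le_add (by norm_num [mul_comm])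
    (((summable_nat_add_iff 1).2 hs).tsum_le_tsum (fun l => ?_)
      (summable_add_two_sq_mul_exp_neg_pi.mul_left _))
  have hl : 1 ≤ ((l : ℝ) + 2) ^ 2 := by nlinarith [(Nat.cast_nonneg l : (0 : ℝ) ≤ l)]
  push_cast
  exact (le_of_eq (by ring_nf)).trans (two_mul_sq_mul_exp_le ht hl)

lemma exp_neg_le_tsum_two_mul_add_one_sq_mul_exp {t : ℝ} (ht : 0 < t) :
    exp (-t) ≤ ∑' l : ℕ, (2 * (l : ℝ) + 1) ^ 2 * exp (-t * (2 * l + 1) ^ 2) := by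
  simpa using
    (summable_sq_mul_exp_neg_mul_sq_two_mul_add ht 1).le_tsum 0 fun _ _ => by positivity

theorem stmt_17 (ρ : ℝ) (hρ0 : 0 < ρ) (hρ2 : ρ < 2) :
    (4 * (1 + ∑' l : ℕ, ((l:ℝ)+2)^2 * Real.exp (-π*(((l:ℝ)+2)^2 - 1))) < Real.exp (π/2)) ∧
    (∑' l : ℕ, (2*(l:ℝ)+2)^2 * Real.exp (-π*(2*(l:ℝ)+2)^2/ρ^2)) <
      (∑' l : ℕ, (2*(l:ℝ)+1)^2 * Real.exp (-π*(2*(l:ℝ)+1)^2/ρ^2)) * Real.exp (-π/ρ^2) := by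
  refine ⟨four_mul_one_add_tsum_lt_exp_pi_div_two, ?_⟩
  have hρsq : ρ ^ 2 < 4 := by nlinarith
  have hπt : π < 4 * (π / ρ ^ 2) := by
    rw [mul_div_assoc', lt_div_iff₀ (by positivity)]
    nlinarith [pi_pos]
  have hexp (x : ℝ) : -π * x / ρ ^ 2 = -(π / ρ ^ 2) * x := by ring
  simp only [hexp, neg_div]
  generalize π / ρ ^ 2 = t at hπt ⊢
  calc _ ≤ 4 * exp (-(4 * t)) *
          (1 + ∑' l : ℕ, ((l : ℝ) + 2) ^ 2 * exp (-π * (((l : ℝ) + 2) ^ 2 - 1))) :=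
        tsum_two_mul_add_two_sq_mul_exp_le hπt.le
    _ < exp (-(4 * t)) * exp (π / 2) := by
        rw [mul_comm 4, mul_assoc]
        gcongr
        exact four_mul_one_add_tsum_lt_exp_pi_div_two
    _ < exp (-(4 * t)) * exp (2 * t) := by gcongr; linarith
    _ = exp (-t) * exp (-t) := by rw [← exp_add, ← exp_add]; ring_nf
    _ ≤ _ := by
        gcongr
        exact exp_neg_le_tsum_two_mul_add_one_sq_mul_exp (by linarith [pi_pos])
end

section
/- Let f_μ : ℝ → (0, ∞), μ ∈ ℕ, be defined recursively by f_{μ+1}(x) = f_μ(x)/(1 + s_{μ+1}x²) with s_{μ+1} ≥ 0, where f_0(x) = e^{-2πx²/h²} (a Gaussian), and assume all relevant series converge. Then for every w ∈ [0,1] and every μ, Σ_{n,k∈ℤ} [(w+k)² - (w+n)²] f_μ(w+k) f_{μ+1}(w+n) = Σ_{n∈ℤ} Σ_{k≥1} s_{μ+1} k² (2w + 2n + k)² f_μ(w+n+k) f_μ(w+n) / [(1 + s_{μ+1}(w+n)²)(1 + s_{μ+1}(w+n+k)²)] ≥ 0; consequently B̃_{μ+1}(w) ≤ B̃_μ(w),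 where B̃_μ(w) = (Σ_n (w+n)² f_μ(w+n))/(Σ_n f_μ(w+n)). -/
open Real

/-!
Write `x_n = w + n`. Cross-multiplying, `B̃_{μ+1}(w) ≤ B̃_μ(w)` says exactly that the double sum
`S = ∑_{n,k} (x_k² - x_n²) f_μ(x_k) f_{μ+1}(x_n)` is nonnegative. Its diagonal terms vanish, and
since `f_{μ+1}(x) = f_μ(x) / (1 + s x²)`, the terms at `(n, k)` and `(k, n)` add up to
`s (x_k² - x_n²)² f_μ(x_k) f_μ(x_n) / ((1 + s x_n²)(1 + s x_k²)) ≥ 0`.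
-/

theorem HasSum.int_prod_pair_offDiag {α : Type*} [AddCommGroup α] [UniformSpace α]
    [IsUniformAddGroup α] [CompleteSpace α] [T2Space α] {F : ℤ × ℤ → α} {a : α}
    (hF : HasSum F a) (hdiag : ∀ n, F (n, n) = 0) :
    HasSum (fun q : ℤ × ℕ ↦ F (q.1, q.1 + q.2 + 1) + F (q.1 + q.2 + 1, q.1)) a := by
  set above : ℤ × ℕ → ℤ × ℤ := fun q ↦ (q.1, q.1 + q.2 + 1)
  set below : ℤ × ℕ → ℤ × ℤ := fun q ↦ (q.1 + q.2 + 1, q.1)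
  have hinj : (Sum.elim above below).Injective := by
    rintro (⟨n, k⟩ | ⟨n, k⟩) (⟨m, l⟩ | ⟨m, l⟩) h <;>
      simp only [above, below, Sum.elim_inl, Sum.elim_inr, Prod.mk.injEq, Sum.inl.injEq,
        Sum.inr.injEq, reduceCtorEq] at h ⊢ <;> omega
  have hrange : ∀ p ∉ Set.range (Sum.elim above below), F p = 0 := by
    rintro ⟨n, m⟩ hp
    obtain rfl : n = m := by
      by_contra hne
      rcases lt_or_gt_of_ne hne with hlt | hlt
      · exact hp ⟨.inl (n, (m - n - 1).toNat), by simp [above]; omega⟩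
      · exact hp ⟨.inr (m, (n - m - 1).toNat), by simp [below]; omega⟩
    exact hdiag n
  have hsum := (hinj.hasSum_iff hrange).mpr hF
  have habove := (hF.summable.comp_injective hinj).comp_injective Sum.inl_injective
  have hbelow := (hF.summable.comp_injective hinj).comp_injective Sum.inr_injective
  rw [hsum.unique (habove.hasSum.sum hbelow.hasSum)]
  exact habove.hasSum.add hbelow.hasSum

theorem tsum_tsum_sub_mul_mul {ι : Type*} (x g h : ι → ℝ)
    (hxg : Summable fun k ↦ x k * g k) (hg : Summable g)
    (hh : Summable h) (hxh : Summable fun n ↦ x n * h n) :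
    ∑' (n : ι) (k : ι), (x k - x n) * g k * h n
      = (∑' k, x k * g k) * (∑' n, h n) - (∑' k, g k) * (∑' n, x n * h n) := by
  have hinner : ∀ n, ∑' k, (x k - x n) * g k * h n
      = (∑' k, x k * g k) * h n - (∑' k, g k) * (x n * h n) := by
    intro n
    calc ∑' k, (x k - x n) * g k * h n = ∑' k, (x k * g k * h n - x n * h n * g k) :=
          tsum_congr fun k ↦ by ring
      _ = _ := by rw [(hxg.mul_right _).tsum_sub (hg.mul_left _), tsum_mul_right, tsum_mul_left,
          mul_comm (x n * h n)]
  rw [tsum_congr hinner, (hh.mul_left _).tsum_sub (hxh.mul_left _), tsum_mul_left, tsum_mul_left]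

theorem sq_sub_sq_mul_add_swap_eq {a : ℝ} (ha : 0 ≤ a) {g G : ℝ → ℝ}
    (hG : ∀ x, G x = g x / (1 + a * x^2)) (w : ℝ) (n : ℤ) (k : ℕ) :
    ((w + ((n + k + 1 : ℤ) : ℝ))^2 - (w + n)^2) * g (w + ((n + k + 1 : ℤ) : ℝ)) * G (w + n)
        + ((w + n)^2 - (w + ((n + k + 1 : ℤ) : ℝ))^2) * g (w + n) * G (w + ((n + k + 1 : ℤ) : ℝ))
      = a * ((k:ℝ)+1)^2 * (2*w + 2*n + ((k:ℝ)+1))^2 * g (w + n + ((k:ℝ)+1)) * g (w + n)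
          / ((1 + a * (w + n)^2) * (1 + a * (w + n + ((k:ℝ)+1))^2)) := by
  have hx : 1 + a * (w + n)^2 ≠ 0 := by positivity
  have hy : 1 + a * (w + n + ((k:ℝ)+1))^2 ≠ 0 := by positivity
  push_cast
  rw [hG, hG, show w + (n + k + 1 : ℝ) = w + n + ((k:ℝ)+1) by ring, mul_div_assoc',
    mul_div_assoc', div_add_div _ _ hx hy,
    div_eq_div_iff (mul_ne_zero hx hy) (mul_ne_zero hx hy)]
  ring

theorem stmt_18_general (s : ℕ → ℝ) (hs : ∀ μ, 0 ≤ s μ)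
    (f : ℕ → ℝ → ℝ)
    (hfrec : ∀ (μ : ℕ) (x : ℝ), f (μ+1) x = f μ x / (1 + s (μ+1) * x^2))
    (hfpos : ∀ (μ : ℕ) (x : ℝ), 0 < f μ x)
    (hsum1 : ∀ (μ : ℕ) (w : ℝ), Summable fun n : ℤ => (w + n)^2 * f μ (w + n))
    (hsum2 : ∀ (μ : ℕ) (w : ℝ), Summable fun n : ℤ => f μ (w + n))
    (hsum3 : ∀ (μ : ℕ) (w : ℝ),
      Summable fun p : ℤ × ℤ =>
        |((w + p.2)^2 - (w + p.1)^2) * f μ (w + p.2) * f (μ+1) (w + p.1)|)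
    (w : ℝ) (μ : ℕ) :
    ((∑' (n : ℤ) (k : ℤ), ((w + k)^2 - (w + n)^2) * f μ (w + k) * f (μ+1) (w + n))
      = ∑' (n : ℤ) (k : ℕ),
          s (μ+1) * ((k:ℝ)+1)^2 * (2*w + 2*n + ((k:ℝ)+1))^2
            * f μ (w + n + ((k:ℝ)+1)) * f μ (w + n)
            / ((1 + s (μ+1) * (w + n)^2) * (1 + s (μ+1) * (w + n + ((k:ℝ)+1))^2))) ∧
    (0 ≤ ∑' (n : ℤ) (k : ℤ), ((w + k)^2 - (w + n)^2) * f μ (w + k) * f (μ+1) (w + n)) ∧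
    (∑' n : ℤ, (w + n)^2 * f (μ+1) (w + n)) / (∑' n : ℤ, f (μ+1) (w + n))
      ≤ (∑' n : ℤ, (w + n)^2 * f μ (w + n)) / (∑' n : ℤ, f μ (w + n)) := by
  have hF := (hsum3 μ w).of_abs
  have hpairs := hF.hasSum.int_prod_pair_offDiag fun n ↦ by simp
  simp only [sq_sub_sq_mul_add_swap_eq (hs (μ+1)) (hfrec μ)] at hpairs
  have hmain : (∑' (n : ℤ) (k : ℤ), ((w + k)^2 - (w + n)^2) * f μ (w + k) * f (μ+1) (w + n))
      = ∑' (n : ℤ) (k : ℕ), s (μ+1) * ((k:ℝ)+1)^2 * (2*w + 2*n + ((k:ℝ)+1))^2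
            * f μ (w + n + ((k:ℝ)+1)) * f μ (w + n)
            / ((1 + s (μ+1) * (w + n)^2) * (1 + s (μ+1) * (w + n + ((k:ℝ)+1))^2)) := by
    rw [← hF.tsum_prod' hF.prod_factor, ← hpairs.tsum_eq,
      hpairs.summable.tsum_prod' hpairs.summable.prod_factor]
  have hnonneg : 0 ≤ ∑' (n : ℤ) (k : ℤ), ((w + k)^2 - (w + n)^2) * f μ (w + k) * f (μ+1) (w + n) :=
    hmain ▸ tsum_nonneg fun n ↦ tsum_nonneg fun k ↦ by
      have := hs (μ+1)
      have := hfpos μ (w + n + ((k:ℝ)+1))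
      have := hfpos μ (w + n)
      positivity
  refine ⟨hmain, hnonneg, ?_⟩
  rw [tsum_tsum_sub_mul_mul (fun k : ℤ ↦ (w + k)^2) (fun k ↦ f μ (w + k)) (fun n ↦ f (μ+1) (w + n))
    (hsum1 μ w) (hsum2 μ w) (hsum2 (μ+1) w) (hsum1 (μ+1) w)] at hnonneg
  have hpos : ∀ μ, 0 < ∑' n : ℤ, f μ (w + n) := fun μ ↦
    (hsum2 μ w).tsum_pos (fun n ↦ (hfpos _ _).le) 0 (hfpos _ _)
  rw [div_le_div_iff₀ (hpos (μ+1)) (hpos μ)]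
  linarith

theorem stmt_18 (h : ℝ) (hh : 0 < h) (s : ℕ → ℝ) (hs : ∀ μ, 0 ≤ s μ)
    (f : ℕ → ℝ → ℝ)
    (hf0 : ∀ x : ℝ, f 0 x = Real.exp (-2*π*x^2/h^2))
    (hfrec : ∀ (μ : ℕ) (x : ℝ), f (μ+1) x = f μ x / (1 + s (μ+1) * x^2))
    (hfpos : ∀ (μ : ℕ) (x : ℝ), 0 < f μ x)
    (hsum1 : ∀ (μ : ℕ) (w : ℝ), Summable fun n : ℤ => (w + n)^2 * f μ (w + n))
    (hsum2 : ∀ (μ : ℕ) (w : ℝ), Summable fun n : ℤ => f μ (w + n))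
    (hsum3 : ∀ (μ : ℕ) (w : ℝ),
      Summable fun p : ℤ × ℤ =>
        |((w + p.2)^2 - (w + p.1)^2) * f μ (w + p.2) * f (μ+1) (w + p.1)|)
    (w : ℝ) (hw : w ∈ Set.Icc (0:ℝ) 1) (μ : ℕ) :
    ((∑' (n : ℤ) (k : ℤ), ((w + k)^2 - (w + n)^2) * f μ (w + k) * f (μ+1) (w + n))
      = ∑' (n : ℤ) (k : ℕ),
          s (μ+1) * ((k:ℝ)+1)^2 * (2*w + 2*n + ((k:ℝ)+1))^2
            * f μ (w + n + ((k:ℝ)+1)) * f μ (w + n)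
            / ((1 + s (μ+1) * (w + n)^2) * (1 + s (μ+1) * (w + n + ((k:ℝ)+1))^2))) ∧
    (0 ≤ ∑' (n : ℤ) (k : ℤ), ((w + k)^2 - (w + n)^2) * f μ (w + k) * f (μ+1) (w + n)) ∧
    (∑' n : ℤ, (w + n)^2 * f (μ+1) (w + n)) / (∑' n : ℤ, f (μ+1) (w + n))
      ≤ (∑' n : ℤ, (w + n)^2 * f μ (w + n)) / (∑' n : ℤ, f μ (w + n)) :=
  stmt_18_general s hs f hfrec hfpos hsum1 hsum2 hsum3 w μ
end

section
/- Let g(w) = e^{-πw²} and for β, γ > 0 set M_{g_γ,1/β} = β² · sup_{w∈[0,1]} (Σ_{j∈ℤ} (w+j)² e^{-2π(w+j)²/ρ²})/(Σ_{j∈ℤ} e^{-2π(w+j)²/ρ²}) with ρ = γ/β. Then lim_{γ→0} M_{g_γ,1/β} = β²/4. -/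
/-!
Write `c = 2π/ρ²` and `x_j = (w + j)²`, so the quotient is the mean of `x_j` under the weights
`e^{-c x_j}`. At `w = 1/2` every `x_j` is at least `1/4`, which gives the lower bound. For the
upper bound let `m = x_{j₀}` with `j₀` the integer nearest to `-w`, so `m ≤ 1/4`. From
`t e^{-(c-1)t} ≤ 1/(c-1)` applied to `t = x_j - m` one gets
`(x_j - m) e^{-c x_j} ≤ e^{-(c-1)m} e^{-x_j}/(c-1)`, and since the denominator is at least
`e^{-c m}`, the quotient exceeds `m` by at most `e^m ∑ⱼ e^{-x_j}/(c-1)`, uniformly `O(1/c)`.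
-/

open Real Filter Topology

noncomputable section

def gaussMass (c w : ℝ) : ℝ := ∑' j : ℤ, exp (-(c * (w + j) ^ 2))

def gaussSecondMoment (c w : ℝ) : ℝ := ∑' j : ℤ, (w + j) ^ 2 * exp (-(c * (w + j) ^ 2))

end

lemma mul_exp_neg_mul_le (t : ℝ) {a : ℝ} (ha : 0 < a) : t * exp (-(a * t)) ≤ 1 / a := by
  rw [le_div_iff₀ ha]
  calc t * exp (-(a * t)) * a = a * t * exp (-(a * t)) := by ring
    _ ≤ exp (a * t) * exp (-(a * t)) := by gcongr; linarith [add_one_le_exp (a * t)]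
    _ = 1 := by rw [← exp_add, add_neg_cancel, exp_zero]

lemma exp_neg_mul_add_sq_le {a : ℝ} (ha : 0 ≤ a) (w x : ℝ) :
    exp (-(a * (w + x) ^ 2)) ≤ exp (a * w ^ 2) * exp (-(a / 2 * x ^ 2)) := by
  rw [← exp_add, exp_le_exp]
  nlinarith [mul_nonneg ha (sq_nonneg (2 * w + x))]

lemma summable_exp_neg_mul_int_sq {a : ℝ} (ha : 0 < a) :
    Summable fun n : ℤ => exp (-(a * n ^ 2)) := by
  refine (summable_pow_mul_jacobiTheta₂_term_bound 0 (div_pos ha pi_pos) 0).congr fun n => ?_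
  rw [pow_zero, one_mul]
  congr 1
  field_simp
  ring

lemma summable_exp_neg_mul_add_int_sq {a : ℝ} (ha : 0 < a) (w : ℝ) :
    Summable fun j : ℤ => exp (-(a * (w + j) ^ 2)) :=
  ((summable_exp_neg_mul_int_sq (half_pos ha)).mul_left (exp (a * w ^ 2))).of_nonneg_of_le
    (fun _ => (exp_pos _).le) fun j => exp_neg_mul_add_sq_le ha.le w j

lemma summable_sq_mul_exp_neg_mul_add_int_sq {a : ℝ} (ha : 0 < a) (w : ℝ) :
    Summable fun j : ℤ => (w + j) ^ 2 * exp (-(a * (w + j) ^ 2)) := by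
  refine ((summable_exp_neg_mul_add_int_sq (half_pos ha) w).mul_left (1 / (a / 2))).of_nonneg_of_le
    (fun _ => by positivity) fun j => ?_
  set x := (w + (j : ℝ)) ^ 2
  calc x * exp (-(a * x)) = x * exp (-(a / 2 * x)) * exp (-(a / 2 * x)) := by
        rw [mul_assoc, ← exp_add]; ring_nf
    _ ≤ 1 / (a / 2) * exp (-(a / 2 * x)) := by
        gcongr; exact mul_exp_neg_mul_le x (half_pos ha)

lemma gaussMass_pos {c : ℝ} (hc : 0 < c) (w : ℝ) : 0 < gaussMass c w :=
  (summable_exp_neg_mul_add_int_sq hc w).tsum_pos (fun _ => (exp_pos _).le) 0 (exp_pos _)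

lemma gaussMass_nonneg (c w : ℝ) : 0 ≤ gaussMass c w :=
  tsum_nonneg fun _ => (exp_pos _).le

lemma gaussMass_one_le (w : ℝ) : gaussMass 1 w ≤ exp (w ^ 2) * gaussMass (1 / 2) 0 := by
  rw [gaussMass, gaussMass, ← tsum_mul_left]
  refine (summable_exp_neg_mul_add_int_sq one_pos w).tsum_le_tsum (fun j => ?_)
    ((summable_exp_neg_mul_add_int_sq one_half_pos 0).mul_left _)
  simpa using exp_neg_mul_add_sq_le zero_le_one w j

lemma mul_gaussMass_le_gaussSecondMoment {c w m : ℝ} (hc : 0 < c)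
    (hm : ∀ j : ℤ, m ≤ (w + j) ^ 2) : m * gaussMass c w ≤ gaussSecondMoment c w := by
  rw [gaussMass, gaussSecondMoment, ← tsum_mul_left]
  exact ((summable_exp_neg_mul_add_int_sq hc w).mul_left m).tsum_le_tsum
    (fun j => by gcongr; exact hm j) (summable_sq_mul_exp_neg_mul_add_int_sq hc w)

lemma gaussSecondMoment_le {c : ℝ} (hc : 1 < c) (w : ℝ) (j₀ : ℤ) :
    gaussSecondMoment c w ≤
      ((w + j₀) ^ 2 + exp ((w + j₀) ^ 2) * gaussMass 1 w / (c - 1)) * gaussMass c w := by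
  set m := (w + (j₀ : ℝ)) ^ 2
  have hc1 : 0 < c - 1 := sub_pos.2 hc
  have hterm (x : ℝ) : x * exp (-(c * x)) ≤
      m * exp (-(c * x)) + exp (-((c - 1) * m)) / (c - 1) * exp (-(1 * x)) := by
    calc x * exp (-(c * x)) = m * exp (-(c * x)) +
          (x - m) * exp (-((c - 1) * (x - m))) * exp (-((c - 1) * m) + -(1 * x)) := by
          rw [mul_assoc (x - m), ← exp_add]; ring_nf
      _ ≤ m * exp (-(c * x)) + 1 / (c - 1) * exp (-((c - 1) * m) + -(1 * x)) := by
          gcongr; exact mul_exp_neg_mul_le _ hc1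
      _ = _ := by rw [exp_add]; ring
  have hsum : gaussSecondMoment c w ≤
      m * gaussMass c w + exp (-((c - 1) * m)) / (c - 1) * gaussMass 1 w := by
    have hD := summable_exp_neg_mul_add_int_sq (one_pos.trans hc) w
    have hE := summable_exp_neg_mul_add_int_sq one_pos w
    rw [gaussMass, gaussMass, ← tsum_mul_left, ← tsum_mul_left,
      ← (hD.mul_left m).tsum_add (hE.mul_left _)]
    exact (summable_sq_mul_exp_neg_mul_add_int_sq (one_pos.trans hc) w).tsum_le_tsum
      (fun j => hterm _) ((hD.mul_left m).add (hE.mul_left _))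
  have hmass : exp (-((c - 1) * m)) ≤ exp m * gaussMass c w := by
    calc exp (-((c - 1) * m)) = exp m * exp (-(c * m)) := by rw [← exp_add]; ring_nf
      _ ≤ exp m * gaussMass c w := by
        gcongr
        exact (summable_exp_neg_mul_add_int_sq (one_pos.trans hc) w).le_tsum j₀
          fun _ _ => (exp_pos _).le
  calc gaussSecondMoment c w ≤ _ := hsum
    _ ≤ m * gaussMass c w + exp m * gaussMass c w / (c - 1) * gaussMass 1 w := by
        gcongr; exact gaussMass_nonneg 1 w
    _ = _ := by ring

lemma gaussSecondMoment_div_gaussMass_le {c w : ℝ} (hc : 1 < c) (hw : |w| ≤ 1) :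
    gaussSecondMoment c w / gaussMass c w ≤
      1 / 4 + exp (5 / 4) * gaussMass (1 / 2) 0 / (c - 1) := by
  rw [div_le_iff₀ (gaussMass_pos (one_pos.trans hc) w)]
  refine (gaussSecondMoment_le hc w (-round w)).trans ?_
  have hm : (w + ((-round w : ℤ) : ℝ)) ^ 2 ≤ 1 / 4 := by
    rw [Int.cast_neg, ← sub_eq_add_neg, ← sq_abs]
    nlinarith [abs_sub_round w, abs_nonneg (w - round w)]
  have hmass : exp ((w + ((-round w : ℤ) : ℝ)) ^ 2) * gaussMass 1 w ≤
      exp (5 / 4) * gaussMass (1 / 2) 0 := by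
    have hw2 : w ^ 2 ≤ 1 := by nlinarith [sq_abs w, abs_nonneg w]
    rw [show (5 / 4 : ℝ) = 1 / 4 + 1 by norm_num, exp_add, mul_assoc]
    exact mul_le_mul (exp_le_exp.2 hm) ((gaussMass_one_le w).trans
      (mul_le_mul_of_nonneg_right (exp_le_exp.2 hw2) (gaussMass_nonneg _ _)))
      (gaussMass_nonneg 1 w) (exp_pos _).le
  exact mul_le_mul_of_nonneg_right (by gcongr) (gaussMass_nonneg c w)

lemma quarter_le_half_add_int_sq (j : ℤ) : 1 / 4 ≤ (1 / 2 + (j : ℝ)) ^ 2 := by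
  have h : (0 : ℤ) ≤ j * (j + 1) := by rcases le_or_gt 0 j with hj | hj <;> nlinarith
  have h' : (0 : ℝ) ≤ j * (j + 1) := by exact_mod_cast h
  nlinarith

lemma tendsto_iSup_gaussSecondMoment_div_gaussMass :
    Tendsto (fun c => ⨆ w : Set.Icc (0 : ℝ) 1, gaussSecondMoment c w / gaussMass c w)
      atTop (𝓝 (1 / 4)) := by
  set K := exp (5 / 4) * gaussMass (1 / 2) 0
  have hbound : Tendsto (fun c : ℝ => 1 / 4 + K / (c - 1)) atTop (𝓝 (1 / 4)) := by
    simpa [sub_eq_add_neg] using tendsto_const_nhds.add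
      (tendsto_const_nhds.div_atTop (tendsto_atTop_add_const_right atTop (-1 : ℝ) tendsto_id))
  have hle {c : ℝ} (hc : 1 < c) (w : Set.Icc (0 : ℝ) 1) :
      gaussSecondMoment c w / gaussMass c w ≤ 1 / 4 + K / (c - 1) :=
    gaussSecondMoment_div_gaussMass_le hc (abs_le.2 ⟨by linarith [w.2.1], w.2.2⟩)
  refine tendsto_of_tendsto_of_tendsto_of_le_of_le' tendsto_const_nhds hbound ?_ ?_
  · filter_upwards [eventually_gt_atTop 1] with c hc
    have hhalf : 1 / 4 ≤ gaussSecondMoment c (1 / 2) / gaussMass c (1 / 2) := by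
      rw [le_div_iff₀ (gaussMass_pos (one_pos.trans hc) _)]
      exact mul_gaussMass_le_gaussSecondMoment (one_pos.trans hc) quarter_le_half_add_int_sq
    exact hhalf.trans (le_ciSup_of_le ⟨_, Set.forall_mem_range.2 (hle hc)⟩
      ⟨1 / 2, by norm_num, by norm_num⟩ le_rfl)
  · filter_upwards [eventually_gt_atTop 1] with c hc
    exact ciSup_le (hle hc)

theorem stmt_19 (β : ℝ) (hβ : 0 < β) :
    Filter.Tendsto
      (fun γ : ℝ =>
        β^2 * ⨆ w : Set.Icc (0:ℝ) 1,
          (∑' j : ℤ, ((w:ℝ) + j)^2 * Real.exp (-2*π*((w:ℝ) + j)^2/(γ/β)^2)) /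
            (∑' j : ℤ, Real.exp (-2*π*((w:ℝ) + j)^2/(γ/β)^2)))
      (nhdsWithin 0 (Set.Ioi 0)) (nhds (β^2/4)) := by
  have hc : Tendsto (fun γ : ℝ => 2 * π * β ^ 2 * γ⁻¹ ^ 2) (𝓝[>] 0) atTop :=
    ((tendsto_pow_atTop two_ne_zero).comp tendsto_inv_nhdsGT_zero).const_mul_atTop
      (by positivity)
  have hexponent (γ x : ℝ) : -2 * π * x / (γ / β) ^ 2 = -(2 * π * β ^ 2 * γ⁻¹ ^ 2 * x) := by
    rw [div_pow, div_div_eq_mul_div]; ring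
  simpa only [Function.comp_def, gaussSecondMoment, gaussMass, hexponent, mul_one_div] using
    (tendsto_iSup_gaussSecondMoment_div_gaussMass.comp hc).const_mul (β ^ 2)
end
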